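/- If every unit request in a sequence σ on a circuit C traverses a common fixed edge e of C, then in any feasible schedule with vehicle capacity Cap the number of full subtours is at least ⌈|σ|/Cap⌉; consequently for the evening scenario (all requests end at the origin, hence all traverse the last edge), OPT(σ) = ⌈|σ|/Cap⌉·|C| and SIF_E achieves this value. -/
import Mathlib

lemma fiber_card_le (m Cap : ℕ) (hCap : 0 < Cap) (c : ℕ) :
    ((Finset.univ : Finset (Fin m)).filter (fun j : Fin m => (j : ℕ) / Cap = c)).card ≤ Cap := by
  have : ((Finset.univ : Finset (Fin m)).filter (fun j : Fin m => (j : ℕ) / Cap = c)).card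
      ≤ (Finset.range Cap).card := by
    refine Finset.card_le_card_of_injOn (fun j => (j : ℕ) % Cap) ?_ ?_
    · intro j hj
      exact Finset.mem_range.mpr (Nat.mod_lt _ hCap)
    · intro a ha b hb hab
      simp only [Finset.coe_filter, Set.mem_setOf_eq, Finset.mem_univ, true_and] at ha hb
      have : (a : ℕ) = (b : ℕ) := by
        have h1 := Nat.div_add_mod (a : ℕ) Cap
        have h2 := Nat.div_add_mod (b : ℕ) Cap
        rw [ha] at h1; rw [hb] at h2
        simp only at hab
        omega
      exact Fin.ext this
  simpa using this

/-- **A common edge forces `⌈|σ|/Cap⌉` subtours; `SIF_E` is optimal in the evening.**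
On a circuit of length `N` (cut open into a path with `N` unit edges), suppose
every one of the `m` unit requests `[lo j, hi j]` traverses a common fixed edge
`e` (in the evening scenario all requests end at the origin, hence all traverse
the last edge).  Then any feasible schedule assigning the requests to `k` full
subtours, each carrying at most `Cap` passengers over any edge, satisfies
`k ≥ ⌈m/Cap⌉`; consequently the optimal offline total tour length is
`OPT(σ) = ⌈m/Cap⌉ * N`, and this value is achieved by a feasible schedule
(the one produced by `SIF_E`). -/
theorem common_edge_subtour_bound_and_SIFE
    (N m Cap : ℕ) (hN : 0 < N) (hCap : 0 < Cap)
    (lo hi : Fin m → Fin N) (hlh : ∀ j, lo j ≤ hi j)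
    (e : Fin N) (he : ∀ j, lo j ≤ e ∧ e ≤ hi j) :
    (∀ (k : ℕ) (f : Fin m → Fin k),
        (∀ (t : Fin k) (e' : Fin N),
          (Finset.univ.filter (fun j => f j = t ∧ lo j ≤ e' ∧ e' ≤ hi j)).card ≤ Cap) →
        (m + Cap - 1) / Cap ≤ k) ∧
    IsLeast {c : ℕ | ∃ (k : ℕ) (f : Fin m → Fin k),
        (∀ (t : Fin k) (e' : Fin N),
          (Finset.univ.filter (fun j => f j = t ∧ lo j ≤ e' ∧ e' ≤ hi j)).card ≤ Cap) ∧
        c = k * N} (((m + Cap - 1) / Cap) * N) := by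
  have key : ∀ (k : ℕ) (f : Fin m → Fin k),
      (∀ (t : Fin k) (e' : Fin N),
        (Finset.univ.filter (fun j => f j = t ∧ lo j ≤ e' ∧ e' ≤ hi j)).card ≤ Cap) →
      (m + Cap - 1) / Cap ≤ k := by
    intro k f hf
    have hm : m ≤ Cap * k := by
      have hsum : (Finset.univ : Finset (Fin m)).card = ∑ t : Fin k,
          (Finset.univ.filter (fun j => f j = t)).card :=
        Finset.card_eq_sum_card_fiberwise (fun x _ => Finset.mem_univ _)
      have hle : ∀ t : Fin k, (Finset.univ.filter (fun j => f j = t)).card ≤ Cap := by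
        intro t
        have h1 := hf t e
        have heq : (Finset.univ.filter (fun j => f j = t ∧ lo j ≤ e ∧ e ≤ hi j))
            = (Finset.univ.filter (fun j : Fin m => f j = t)) := by
          apply Finset.filter_congr
          intro j _
          simp [(he j).1, (he j).2]
        rwa [heq] at h1
      calc m = ∑ t : Fin k, (Finset.univ.filter (fun j => f j = t)).card := by
              simpa using hsum
        _ ≤ ∑ _t : Fin k, Cap := Finset.sum_le_sum (fun t _ => hle t)
        _ = Cap * k := by simp [mul_comm]
    rw [Nat.div_le_iff_le_mul_add_pred hCap]
    omega
  refine ⟨key, ?_, ?_⟩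
  · -- membership
    rcases Nat.eq_zero_or_pos m with hm | hm
    · subst hm
      refine ⟨0, Fin.elim0, fun t => t.elim0, ?_⟩
      have h0 : (0 + Cap - 1) / Cap = 0 := Nat.div_eq_of_lt (by omega)
      rw [h0, Nat.zero_mul]
    · have hlt : ∀ j : Fin m, (j : ℕ) / Cap < (m + Cap - 1) / Cap := by
        intro j
        have h1 : (m + Cap - 1) / Cap = (m - 1) / Cap + 1 := by
          have : m + Cap - 1 = (m - 1) + Cap := by omega
          rw [this, Nat.add_div_right _ hCap]
        have h2 : (j : ℕ) / Cap ≤ (m - 1) / Cap :=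
          Nat.div_le_div_right (by omega)
        rw [h1]; exact Nat.lt_succ_of_le h2
      refine ⟨(m + Cap - 1) / Cap, fun j => ⟨(j : ℕ) / Cap, hlt j⟩, ?_, rfl⟩
      intro t e'
      have hsub : (Finset.univ.filter
            (fun j : Fin m => (⟨(j : ℕ) / Cap, hlt j⟩ : Fin _) = t ∧ lo j ≤ e' ∧ e' ≤ hi j))
          ⊆ (Finset.univ.filter (fun j : Fin m => (j : ℕ) / Cap = (t : ℕ))) := by
        intro j hj
        simp only [Finset.mem_filter, Finset.mem_univ, true_and] at hj ⊢
        exact congrArg Fin.val hj.1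
      exact le_trans (Finset.card_le_card hsub) (fiber_card_le m Cap hCap _)
  · -- lower bound
    rintro c ⟨k, f, hf, rfl⟩
    exact Nat.mul_le_mul_right N (key k f hf)
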